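/- arXiv:2405.12304 — 2 statements merged into one kernel-verified Lean document; each statement's English description precedes it below -/
import Mathlib

section
/- Let V be a finite set of operations with type function typ : V → Op, per-type latency LO : Op → ℕ with LO o ≥ 1 (so each operation v has latency lat v = LO (typ v)), a dependence relation E on V, and resource bounds R : Op → ℕ with R o ≥ 1. Let start : V → ℕ be any schedule that respects E and satisfies the resource constraint R. Then the makespan of the schedule is at least max( C , max over types o of ⌈ LO o × N o / R o ⌉ ), where C is the maximum over all dependence chains v₀, …, v_k in (V, E) of ∑_{i=0}^{k} LO (typ vᵢ), and N o = |{v ∈ V : typ v = o}|. -/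
/-!
Along a dependence chain each operation starts only after its predecessor has finished, so the
chain's total latency is at most the finishing time of its last operation. For the resource bound,
count the pairs (operation of type `o`, cycle before the makespan `M` in which it executes) in two
ways: each operation contributes its latency `LO o`, each cycle at most `R o`; hence
`LO o * N o ≤ R o * M`, which is `⌈LO o * N o / R o⌉ ≤ M`.
-/

open Finset

section Schedule

variable {V : Type*} (start lat : V → ℕ)

theorem sum_lat_le_finish_of_chain {E : V → V → Prop}
    (hresp : ∀ v w, E v w → start v + lat v ≤ start w) :
    ∀ {k : ℕ} (v : Fin (k + 1) → V), (∀ i : Fin k, E (v i.castSucc) (v i.succ)) →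
      ∑ i, lat (v i) ≤ start (v (Fin.last k)) + lat (v (Fin.last k))
  | 0, v, _ => by simp
  | k + 1, v, hchain => by
    have hprefix := sum_lat_le_finish_of_chain hresp (v ∘ Fin.castSucc)
      (fun i => hchain i.castSucc)
    have hlast : start (v (Fin.last k).castSucc) + lat (v (Fin.last k).castSucc)
        ≤ start (v (Fin.last (k + 1))) := hresp _ _ (hchain (Fin.last k))
    rw [Fin.sum_univ_castSucc]
    simp only [Function.comp_apply] at hprefix
    omega

theorem card_filter_executing_eq {M : ℕ} {v : V} (hv : start v + lat v ≤ M) :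
    #{t ∈ range M | start v ≤ t ∧ t < start v + lat v} = lat v := by
  have : {t ∈ range M | start v ≤ t ∧ t < start v + lat v} = Ico (start v) (start v + lat v) := by
    ext t
    simp only [mem_filter, mem_range, mem_Ico]
    omega
  rw [this, Nat.card_Ico, Nat.add_sub_cancel_left]

theorem sum_lat_le_mul_of_card_executing_le (s : Finset V) {M r : ℕ}
    (hM : ∀ v ∈ s, start v + lat v ≤ M)
    (hcap : ∀ t, #{v ∈ s | start v ≤ t ∧ t < start v + lat v} ≤ r) :
    ∑ v ∈ s, lat v ≤ M * r := by
  let executes (v : V) (t : ℕ) : Prop := start v ≤ t ∧ t < start v + lat v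
  calc ∑ v ∈ s, lat v = ∑ v ∈ s, #((range M).bipartiteAbove executes v) :=
        sum_congr rfl fun v hv => (card_filter_executing_eq start lat (hM v hv)).symm
    _ = ∑ t ∈ range M, #(s.bipartiteBelow executes t) :=
        sum_card_bipartiteAbove_eq_sum_card_bipartiteBelow executes
    _ ≤ ∑ _t ∈ range M, r := sum_le_sum fun t _ => hcap t
    _ = M * r := by rw [sum_const, card_range, smul_eq_mul]

end Schedule

theorem latency_lower_bound_under_resource_constraints_general
    {V Op : Type*} [Fintype V] [DecidableEq Op]
    (E : V → V → Prop) (typ : V → Op)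
    (LO : Op → ℕ)
    (R : Op → ℕ) (hR : ∀ o, 1 ≤ R o)
    (start : V → ℕ)
    (hresp : ∀ v w, E v w → start v + LO (typ v) ≤ start w)
    (hres : ∀ t o,
      ((Finset.univ.filter
          (fun v => typ v = o ∧ start v ≤ t ∧ t < start v + LO (typ v))).card) ≤ R o) :
    (∀ (k : ℕ) (v : Fin (k + 1) → V),
        (∀ i : Fin k, E (v i.castSucc) (v i.succ)) →
        ∑ i, LO (typ (v i)) ≤ Finset.univ.sup (fun u => start u + LO (typ u))) ∧
    (∀ o : Op,
        (LO o * (Finset.univ.filter (fun v => typ v = o)).card + R o - 1) / R o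
          ≤ Finset.univ.sup (fun u => start u + LO (typ u))) := by
  set lat := fun v => LO (typ v)
  set M := univ.sup fun u => start u + lat u
  have hfinish (u : V) : start u + lat u ≤ M := le_sup (f := fun u => start u + lat u) (mem_univ u)
  refine ⟨fun k v hchain => (sum_lat_le_finish_of_chain start lat hresp v hchain).trans
    (hfinish _), fun o => ?_⟩
  have hwork := sum_lat_le_mul_of_card_executing_le start lat {v | typ v = o}
    (fun v _ => hfinish v) (fun t => by simpa only [filter_filter] using hres t o)
  have hsum : ∑ v with typ v = o, lat v = LO o * #{v | typ v = o} := by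
    rw [sum_congr rfl fun v hv => congrArg LO (mem_filter.mp hv).2, sum_const, smul_eq_mul,
      mul_comm]
  rw [← Nat.ceilDiv_eq_add_pred_div, ceilDiv_le_iff_le_smul (hR o), smul_eq_mul, mul_comm (R o)]
  exact hsum ▸ hwork

/-- **Latency lower bound under operation resource constraints.**
Operations have per-type latencies `LO (typ v) ≥ 1`; the schedule `start`
respects the dependence relation `E` and, at every cycle, uses at most `R o`
units of each operation type `o`.  Then the makespan is at least the
latency-weighted length of every dependence chain (so it is at least the
critical path `C`), and for every type `o` it is at least
`⌈LO o * N o / R o⌉` where `N o` is the number of operations of type `o`;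
hence it is at least the maximum of all these quantities. -/
theorem latency_lower_bound_under_resource_constraints
    {V Op : Type*} [Fintype V] [Fintype Op] [DecidableEq Op]
    (E : V → V → Prop) (typ : V → Op)
    (LO : Op → ℕ) (hLO : ∀ o, 1 ≤ LO o)
    (R : Op → ℕ) (hR : ∀ o, 1 ≤ R o)
    (start : V → ℕ)
    (hresp : ∀ v w, E v w → start v + LO (typ v) ≤ start w)
    (hres : ∀ t o,
      ((Finset.univ.filter
          (fun v => typ v = o ∧ start v ≤ t ∧ t < start v + LO (typ v))).card) ≤ R o) :
    (∀ (k : ℕ) (v : Fin (k + 1) → V),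
        (∀ i : Fin k, E (v i.castSucc) (v i.succ)) →
        ∑ i, LO (typ (v i)) ≤ Finset.univ.sup (fun u => start u + LO (typ u))) ∧
    (∀ o : Op,
        (LO o * (Finset.univ.filter (fun v => typ v = o)).card + R o - 1) / R o
          ≤ Finset.univ.sup (fun u => start u + LO (typ u))) :=
  latency_lower_bound_under_resource_constraints_general E typ LO R hR start hresp hres
end

section
/- Let (V, E, lat, typ) and (V′, E′, lat′, typ′) be finite operation sets equipped with dependence relations, latencies (everywhere ≥ 1) and operation types, and let φ : V → V′ be an injective map such that E v w implies E′ (φ v) (φ w), lat′ (φ v) = lat v, and typ′ (φ v) = typ v for all v, w ∈ V. Fix resource bounds R : Op → ℕ with R o ≥ 1. Define LB(V) = max( max over dependence chains v₀,…,v_k in (V,E) of ∑_i lat vᵢ , max over types o of ⌈(∑_{v ∈ V, typ v = o} lat v) / R o⌉ ), and define LB(V′) analogously. Then LB(V′) ≥ LB(V); in particular, every schedule for V′ that respects E′ and satisfies the resource constraint R has makespan at least LB(V). -/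
/-- `IsChainOn E v` says that `v 0, v 1, …, v k` is a dependence chain for the
dependence relation `E`. -/
def IsChainOn {V : Type*} (E : V → V → Prop) {k : ℕ} (v : Fin (k + 1) → V) : Prop :=
  ∀ i : Fin k, E (v i.castSucc) (v i.succ)

/-- The latency lower bound `LB` of a finite operation set `(V, E, lat, typ)`
under resource bounds `R` : the maximum of (a) the supremum, over all
dependence chains, of the sum of the latencies along the chain, and (b) the
maximum over operation types `o` of `⌈(∑_{typ v = o} lat v) / R o⌉`
(valued in `ℕ∞` so that the supremum over chains always exists). -/
noncomputable def latLB {V Op : Type*} [Fintype V] [Fintype Op] [DecidableEq Op]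
    (E : V → V → Prop) (lat : V → ℕ) (typ : V → Op) (R : Op → ℕ) : ℕ∞ :=
  max
    (⨆ (k : ℕ) (v : Fin (k + 1) → V) (_ : IsChainOn E v), ((∑ i, lat (v i) : ℕ) : ℕ∞))
    ((Finset.univ.sup fun o : Op =>
        ((∑ v ∈ Finset.univ.filter (fun v => typ v = o), lat v) + R o - 1) / R o : ℕ) : ℕ∞)

/-- Along a dependence chain respected by a schedule, the sum of latencies is at
most the finish time of the last operation of the chain. -/
lemma chain_sum_le_finish {V' : Type*} (E' : V' → V' → Prop) (start' lat' : V' → ℕ)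
    (hresp : ∀ v w, E' v w → start' v + lat' v ≤ start' w) :
    ∀ (k : ℕ) (w : Fin (k + 1) → V'), IsChainOn E' w →
      ∑ i, lat' (w i) ≤ start' (w (Fin.last k)) + lat' (w (Fin.last k)) := by
  intro k
  induction k with
  | zero => intro w _; simp
  | succ k ih =>
      intro w hw
      rw [Fin.sum_univ_castSucc]
      have hchain : IsChainOn E' (fun i : Fin (k + 1) => w i.castSucc) := by
        intro i
        have := hw i.castSucc
        simpa [Fin.castSucc, Fin.succ] using this
      have h1 : ∑ i : Fin (k+1), lat' (w i.castSucc) ≤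
          start' (w (Fin.last k).castSucc) + lat' (w (Fin.last k).castSucc) :=
        ih (fun i => w i.castSucc) hchain
      have h2 : E' (w (Fin.last k).castSucc) (w (Fin.last (k+1))) := by
        have := hw (Fin.last k)
        simpa using this
      have := hresp _ _ h2
      omega

/-- Double-counting: the total workload of type `o` is at most
makespan times the resource bound. -/
lemma workload_le_makespan_mul {V' Op : Type*} [Fintype V'] [DecidableEq Op]
    (start' lat' : V' → ℕ) (typ' : V' → Op) (R : Op → ℕ) (o : Op)
    (hres : ∀ t,
        ((Finset.univ.filter
            (fun v' => typ' v' = o ∧ start' v' ≤ t ∧ t < start' v' + lat' v')).card) ≤ R o) :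
    ∑ v' ∈ Finset.univ.filter (fun v' => typ' v' = o), lat' v' ≤
      (Finset.univ.sup fun v' => start' v' + lat' v') * R o := by
  set T := Finset.univ.sup fun v' => start' v' + lat' v' with hT
  have h1 : ∀ v' ∈ Finset.univ.filter (fun v' => typ' v' = o),
      lat' v' = ((Finset.range T).filter
        (fun t => start' v' ≤ t ∧ t < start' v' + lat' v')).card := by
    intro v' _
    have hle : start' v' + lat' v' ≤ T :=
      Finset.le_sup (f := fun v' => start' v' + lat' v') (Finset.mem_univ v')
    have : (Finset.range T).filter
        (fun t => start' v' ≤ t ∧ t < start' v' + lat' v')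
        = Finset.Ico (start' v') (start' v' + lat' v') := by
      ext t
      simp only [Finset.mem_filter, Finset.mem_range, Finset.mem_Ico]
      omega
    rw [this, Nat.card_Ico]
    omega
  rw [Finset.sum_congr rfl h1]
  have h2 : ∀ v' ∈ Finset.univ.filter (fun v' => typ' v' = o),
      ((Finset.range T).filter
        (fun t => start' v' ≤ t ∧ t < start' v' + lat' v')).card
      = ∑ t ∈ Finset.range T,
          (if start' v' ≤ t ∧ t < start' v' + lat' v' then 1 else 0) := by
    intro v' _
    rw [Finset.card_filter]
  rw [Finset.sum_congr rfl h2, Finset.sum_comm]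
  calc ∑ t ∈ Finset.range T, ∑ v' ∈ Finset.univ.filter (fun v' => typ' v' = o),
          (if start' v' ≤ t ∧ t < start' v' + lat' v' then 1 else 0)
      ≤ ∑ _t ∈ Finset.range T, R o := by
        apply Finset.sum_le_sum
        intro t _
        rw [← Finset.card_filter, Finset.filter_filter]
        exact hres t
    _ = T * R o := by simp [Finset.sum_const, Nat.smul_one_eq_cast]

/-- **Monotonicity of the latency lower bound under embeddings of operation
graphs.**  If `φ : V → V'` is an injective map of operation sets that maps
dependence edges to dependence edges and preserves latencies (everywhere
`≥ 1`) and operation types, then `LB(V') ≥ LB(V)`; in particular, every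
schedule for `V'` that respects `E'` and satisfies the resource constraint `R`
has makespan at least `LB(V)`. -/
theorem latLB_monotone_under_embedding
    {V V' Op : Type*} [Fintype V] [Fintype V'] [Fintype Op] [DecidableEq Op]
    (E : V → V → Prop) (E' : V' → V' → Prop)
    (lat : V → ℕ) (lat' : V' → ℕ) (typ : V → Op) (typ' : V' → Op)
    (hlat : ∀ v, 1 ≤ lat v) (hlat' : ∀ v', 1 ≤ lat' v')
    (φ : V → V') (hφinj : Function.Injective φ)
    (hφE : ∀ v w, E v w → E' (φ v) (φ w))
    (hφlat : ∀ v, lat' (φ v) = lat v)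
    (hφtyp : ∀ v, typ' (φ v) = typ v)
    (R : Op → ℕ) (hR : ∀ o, 1 ≤ R o) :
    latLB E lat typ R ≤ latLB E' lat' typ' R ∧
    ∀ start' : V' → ℕ,
      (∀ v w, E' v w → start' v + lat' v ≤ start' w) →
      (∀ t o,
        ((Finset.univ.filter
            (fun v' => typ' v' = o ∧ start' v' ≤ t ∧ t < start' v' + lat' v')).card) ≤ R o) →
      latLB E lat typ R ≤ ((Finset.univ.sup fun v' => start' v' + lat' v' : ℕ) : ℕ∞) := by
  classical
  -- workload of each type is not decreased by the embedding
  have hsum : ∀ o : Op,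
      ∑ v ∈ Finset.univ.filter (fun v => typ v = o), lat v ≤
      ∑ v' ∈ Finset.univ.filter (fun v' => typ' v' = o), lat' v' := by
    intro o
    have himg : (Finset.univ.filter (fun v => typ v = o)).image φ ⊆
        Finset.univ.filter (fun v' => typ' v' = o) := by
      intro v' hv'
      obtain ⟨v, hv, rfl⟩ := Finset.mem_image.mp hv'
      simp only [Finset.mem_filter, Finset.mem_univ, true_and] at hv ⊢
      rw [hφtyp]; exact hv
    calc ∑ v ∈ Finset.univ.filter (fun v => typ v = o), lat v
        = ∑ v' ∈ (Finset.univ.filter (fun v => typ v = o)).image φ, lat' v' := by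
          rw [Finset.sum_image (fun a _ b _ h => hφinj h)]
          exact Finset.sum_congr rfl fun v _ => (hφlat v).symm
      _ ≤ ∑ v' ∈ Finset.univ.filter (fun v' => typ' v' = o), lat' v' :=
          Finset.sum_le_sum_of_subset himg
  constructor
  · -- LB(V) ≤ LB(V')
    apply max_le
    · refine le_trans ?_ (le_max_left _ _)
      refine iSup_le fun k => iSup_le fun v => iSup_le fun hc => ?_
      have hc' : IsChainOn E' (φ ∘ v) := fun i => hφE _ _ (hc i)
      refine le_iSup_of_le k (le_iSup_of_le (φ ∘ v) (le_iSup_of_le hc' ?_))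
      simp [Function.comp, hφlat]
    · refine le_trans ?_ (le_max_right _ _)
      rw [Nat.cast_le]
      apply Finset.sup_mono_fun
      intro o _
      exact Nat.div_le_div_right (by have := hsum o; omega)
  · -- the schedule bound
    intro start' hresp hres
    set T := Finset.univ.sup fun v' => start' v' + lat' v' with hT
    apply max_le
    · refine iSup_le fun k => iSup_le fun v => iSup_le fun hc => ?_
      rw [Nat.cast_le]
      have hc' : IsChainOn E' (φ ∘ v) := fun i => hφE _ _ (hc i)
      have h1 := chain_sum_le_finish E' start' lat' hresp k (φ ∘ v) hc'
      have h2 : ∑ i, lat' ((φ ∘ v) i) = ∑ i, lat (v i) := by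
        simp [Function.comp, hφlat]
      have h3 : start' ((φ ∘ v) (Fin.last k)) + lat' ((φ ∘ v) (Fin.last k)) ≤ T :=
        Finset.le_sup (f := fun v' => start' v' + lat' v') (Finset.mem_univ _)
      omega
    · rw [Nat.cast_le]
      apply Finset.sup_le
      intro o _
      have hw := workload_le_makespan_mul start' lat' typ' R o (fun t => hres t o)
      rw [← hT] at hw
      have hso := hsum o
      have hRo := hR o
      rw [Nat.div_le_iff_le_mul_add_pred (by omega)]
      calc (∑ v ∈ Finset.univ.filter (fun v => typ v = o), lat v) + R o - 1
          ≤ T * R o + (R o - 1) := by omega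
        _ = R o * T + (R o - 1) := by ring_nf
end
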